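/- arXiv:math-ph/0611056 — 2 statements merged into one kernel-verified Lean document; each statement's English description precedes it below -/
import Mathlib

section
/- Define the 2 × 3 rectangle Gell-Mann system: Λ₀ = I_{2×3} = [[1,0,0],[0,1,0]], Λ₁ = [[0,1,0],[1,0,0]], Λ₂ = [[0,-i,0],[i,0,0]], Λ₃ = [[1,0,0],[0,-1,0]], Λ₄ = [[0,0,√2],[0,0,0]], Λ₅ = [[0,0,0],[0,0,√2]]. Then U_{2⊗3} = (1/2) I_{2×3}† ⊗ I_{2×3} + (1/2) Σ_{a=1}^{5} Λ_a† ⊗ Λ_a. -/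
/-!
Entrywise, `∑ₖ Bₖᴴ ⊗ₖ Bₖ` only depends on the sums `∑ₖ conj (Bₖ r p) * Bₖ q s`. For the matrix
units these are products of Kronecker deltas, which is why their sum is the swap matrix; the same
holds for any family satisfying the completeness relation, i.e. for any orthonormal basis of
`Matrix m n ℂ` under the Hilbert–Schmidt inner product. The rectangle Gell-Mann matrices divided
by `√2` form such a basis.
-/

open Matrix
open scoped Matrix Kronecker

namespace Matrix

variable {m n ι R : Type*} [DecidableEq m] [DecidableEq n]

theorem sum_single_kronecker_single_eq_toMatrix_prodComm [Fintype m] [Fintype n] [Semiring R] :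
    ∑ i : n, ∑ j : m, single i j (1 : R) ⊗ₖ single j i (1 : R) =
      (Equiv.prodComm n m).toPEquiv.toMatrix := by
  ext ⟨p, q⟩ ⟨r, s⟩
  simp [sum_apply, single_apply, PEquiv.toMatrix_apply, ite_and, Finset.sum_ite_eq',
    eq_comm (a := s)]
  split_ifs <;> rfl

theorem smul_sum_conjTranspose_kronecker_eq_toMatrix_prodComm [Fintype ι] [CommSemiring R]
    [StarRing R] (c : R) (B : ι → Matrix m n R)
    (hB : ∀ p q r s, c * ∑ k, star (B k r p) * B k q s = if q = r ∧ p = s then 1 else 0) :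
    c • ∑ k, (B k)ᴴ ⊗ₖ B k = (Equiv.prodComm n m).toPEquiv.toMatrix := by
  ext ⟨p, q⟩ ⟨r, s⟩
  simp [sum_apply, hB, PEquiv.toMatrix_apply]

end Matrix

noncomputable def rectangleGellMann : Fin 6 → Matrix (Fin 2) (Fin 3) ℂ :=
  ![!![1, 0, 0; 0, 1, 0],
    !![0, 1, 0; 1, 0, 0],
    !![0, -Complex.I, 0; Complex.I, 0, 0],
    !![1, 0, 0; 0, -1, 0],
    !![0, 0, (Real.sqrt 2 : ℂ); 0, 0, 0],
    !![0, 0, 0; 0, 0, (Real.sqrt 2 : ℂ)]]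

theorem rectangleGellMann_completeness (p : Fin 3) (q r : Fin 2) (s : Fin 3) :
    (1 / 2 : ℂ) * ∑ k, star (rectangleGellMann k r p) * rectangleGellMann k q s =
      if q = r ∧ p = s then 1 else 0 := by
  have sqrt_two_mul_self : ((Real.sqrt 2 : ℝ) : ℂ) * ((Real.sqrt 2 : ℝ) : ℂ) = 2 := by
    norm_cast
    exact Real.mul_self_sqrt zero_le_two
  fin_cases p <;> fin_cases q <;> fin_cases r <;> fin_cases s <;>
    simp [Fin.sum_univ_succ, rectangleGellMann, sqrt_two_mul_self] <;> ring_nf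

theorem U23_eq_rectangle_gellmann_sum :
    let I23 : Matrix (Fin 2) (Fin 3) ℂ := !![1, 0, 0; 0, 1, 0]
    let Λ : Fin 5 → Matrix (Fin 2) (Fin 3) ℂ :=
      ![!![0, 1, 0; 1, 0, 0],
        !![0, -Complex.I, 0; Complex.I, 0, 0],
        !![1, 0, 0; 0, -1, 0],
        !![0, 0, (Real.sqrt 2 : ℂ); 0, 0, 0],
        !![0, 0, 0; 0, 0, (Real.sqrt 2 : ℂ)]]
    (∑ i : Fin 3, ∑ j : Fin 2,
        (single i j (1 : ℂ)) ⊗ₖ (single j i (1 : ℂ)))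
      = (1 / 2 : ℂ) • (I23ᴴ ⊗ₖ I23) + (1 / 2 : ℂ) • ∑ a : Fin 5, (Λ a)ᴴ ⊗ₖ Λ a := by
  intro I23 Λ
  have h := smul_sum_conjTranspose_kronecker_eq_toMatrix_prodComm _ _
    rectangleGellMann_completeness
  rw [Fin.sum_univ_succ, smul_add] at h
  rw [sum_single_kronecker_single_eq_toMatrix_prodComm, ← h]
  rfl
end

section
/- For the 3 × 2 rectangle Gell-Mann matrices obtained by appending a zero row to the Pauli matrices — Λ₁ = [[0,1],[1,0],[0,0]], Λ₂ = [[0,-i],[i,0],[0,0]], Λ₃ = [[1,0],[0,-1],[0,0]], Λ₄ = [[0,0],[0,0],[√2,0]], Λ₅ = [[0,0],[0,0],[0,√2]] — and I_{3×2} = [[1,0],[0,1],[0,0]], one has U_{3⊗2} = (1/2) I_{3×2}† ⊗ I_{3×2} + (1/2) Σ_{a=1}^{5} Λ_a† ⊗ Λ_a. -/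
/-!
The matrices `I₃ₓ₂, Λ₁, …, Λ₅` are pairwise orthogonal for the Hilbert–Schmidt inner
product, each of squared norm `2`, and there are `6 = 3 · 2` of them. Flattening them into the
rows of a square matrix `V` gives `V Vᴴ = 2`, hence also `Vᴴ V = 2`: this completeness relation
`∑ₖ conj (Bₖ c a) · Bₖ b d = 2 δ_cb δ_ad` is exactly the entrywise form of the claimed
identity for the swap operator.
-/

open Matrix
open scoped Matrix Kronecker

namespace Matrix

variable {ι m n K : Type*} [Fintype ι] [Fintype m] [Fintype n] [DecidableEq ι]
  [DecidableEq m] [DecidableEq n] [Field K]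

theorem mul_eq_smul_one_of_mul_eq_smul_one {A : Matrix m n K} {B : Matrix n m K} {r : K}
    (hr : r ≠ 0) (hcard : Fintype.card m = Fintype.card n) (h : A * B = r • 1) :
    B * A = r • 1 := by
  have hinv : (r⁻¹ • A) * B = 1 := by
    rw [smul_mul, h, smul_smul, inv_mul_cancel₀ hr, one_smul]
  rw [mul_eq_one_comm_of_card_eq m n K hcard, Matrix.mul_smul] at hinv
  rw [← hinv, smul_smul, mul_inv_cancel₀ hr, one_smul]

theorem sum_single_kronecker_single_apply (a : n) (b c : m) (d : n) :
    (∑ i : n, ∑ j : m, single i j (1 : K) ⊗ₖ single j i (1 : K)) (a, b) (c, d) =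
      if a = d ∧ b = c then 1 else 0 := by
  simp only [sum_apply, kroneckerMap_apply, single_apply, ite_and, mul_ite, mul_one, mul_zero]
  simp [Finset.sum_ite_eq, eq_comm]

theorem sum_single_kronecker_single_eq_smul_sum_conjTranspose_kronecker [StarRing K]
    (B : ι → Matrix m n K) {r : K} (hr : r ≠ 0)
    (hcard : Fintype.card ι = Fintype.card m * Fintype.card n)
    (horth : ∀ k l, ∑ i, ∑ j, B k i j * star (B l i j) = if k = l then r else 0) :
    ∑ i : n, ∑ j : m, single i j (1 : K) ⊗ₖ single j i (1 : K) =
      r⁻¹ • ∑ k, (B k)ᴴ ⊗ₖ B k := by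
  set V : Matrix ι (m × n) K := of fun k p => B k p.1 p.2
  have hrows : V * Vᴴ = r • 1 := by
    ext k l
    simp [V, mul_apply, Fintype.sum_prod_type, horth, one_apply]
  have hcols : Vᴴ * V = r • 1 :=
    mul_eq_smul_one_of_mul_eq_smul_one hr (by simpa using hcard) hrows
  ext ⟨a, b⟩ ⟨c, d⟩
  have hcomplete := congrFun (congrFun hcols (c, a)) (b, d)
  simp only [V, mul_apply, conjTranspose_apply, of_apply, smul_apply, one_apply, Prod.mk.injEq,
    smul_eq_mul] at hcomplete
  rw [sum_single_kronecker_single_apply]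
  simp [sum_apply, kroneckerMap_apply, hcomplete, inv_mul_cancel₀ hr, and_comm, eq_comm]

end Matrix

theorem U32_eq_rectangle_gellmann_sum :
    let I32 : Matrix (Fin 3) (Fin 2) ℂ := !![1, 0; 0, 1; 0, 0]
    let Λ : Fin 5 → Matrix (Fin 3) (Fin 2) ℂ :=
      ![!![0, 1; 1, 0; 0, 0],
        !![0, -Complex.I; Complex.I, 0; 0, 0],
        !![1, 0; 0, -1; 0, 0],
        !![0, 0; 0, 0; (Real.sqrt 2 : ℂ), 0],
        !![0, 0; 0, 0; 0, (Real.sqrt 2 : ℂ)]]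
    (∑ i : Fin 2, ∑ j : Fin 3,
        (single i j (1 : ℂ)) ⊗ₖ (single j i (1 : ℂ)))
      = (1 / 2 : ℂ) • (I32ᴴ ⊗ₖ I32) + (1 / 2 : ℂ) • ∑ a : Fin 5, (Λ a)ᴴ ⊗ₖ Λ a := by
  intro I32 Λ
  set B : Fin 6 → Matrix (Fin 3) (Fin 2) ℂ := Fin.cons I32 Λ
  have hsqrt : (Real.sqrt 2 : ℂ) * Real.sqrt 2 = 2 := by
    rw [← Complex.ofReal_mul, Real.mul_self_sqrt zero_le_two, Complex.ofReal_ofNat]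
  have horth : ∀ k l, ∑ i, ∑ j, B k i j * star (B l i j) = if k = l then 2 else 0 := by
    intro k l
    fin_cases k <;> fin_cases l <;> simp [B, I32, Λ, Fin.sum_univ_succ, hsqrt, one_add_one_eq_two]
  rw [sum_single_kronecker_single_eq_smul_sum_conjTranspose_kronecker B two_ne_zero (by simp)
    horth, Fin.sum_univ_succ, smul_add, one_div]
  rfl
end
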